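/- Let S₁ ⊂ C³⊗C³ be the nine-element orthonormal product basis {|0⟩|0±1⟩, |0⟩|2⟩, |1±2⟩|0⟩, |1⟩|1±2⟩, |2⟩|1⟩, |2⟩|2⟩} (with |i±j⟩ := (|i⟩±|j⟩)/√2). If M is a 3×3 positive semidefinite Hermitian matrix acting on the first factor such that the vectors (M^{1/2}⊗I)|ψ⟩, ψ ∈ S₁, are pairwise orthogonal, then M = diag(λ₀, λ, λ) in the standard basis, for some λ₀, λ ≥ 0. -/

import Mathlib

open scoped InnerProductSpace ComplexOrder

noncomputable section

/-- Tensor product of two vectors in the composite Euclidean (Hilbert) space. -/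
def tmul {m n : ℕ} (a : Fin m → ℂ) (b : Fin n → ℂ) :
    EuclideanSpace ℂ (Fin m × Fin n) := WithLp.toLp 2 (fun p : Fin m × Fin n => a p.1 * b p.2)

/-- Standard basis ket of C³. -/
def ket (i : Fin 3) : Fin 3 → ℂ := fun k => if k = i then 1 else 0

/-- `(|i⟩ + |j⟩)/√2`. -/
def plusK (i j : Fin 3) : Fin 3 → ℂ := (Real.sqrt 2 : ℂ)⁻¹ • (ket i + ket j)

/-- `(|i⟩ − |j⟩)/√2`. -/
def minusK (i j : Fin 3) : Fin 3 → ℂ := (Real.sqrt 2 : ℂ)⁻¹ • (ket i - ket j)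

/-- Alice's local parts of the set S₁. -/
def S1A : Fin 9 → Fin 3 → ℂ :=
  ![ket 0, ket 0, ket 0, plusK 1 2, minusK 1 2, ket 1, ket 1, ket 2, ket 2]

/-- Bob's local parts of the set S₁. -/
def S1B : Fin 9 → Fin 3 → ℂ :=
  ![plusK 0 1, minusK 0 1, ket 2, ket 0, ket 0, plusK 1 2, minusK 1 2, ket 1, ket 2]

/-- The set S₁ of nine product states in C³ ⊗ C³. -/
def S1 : Fin 9 → EuclideanSpace ℂ (Fin 3 × Fin 3) := fun i => tmul (S1A i) (S1B i)

/-- The square root of a positive semidefinite matrix, as `Matrix.PosSemidef.sqrt` was defined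
in the older Mathlib (that declaration has since been removed). -/
def psdSqrt {n : Type*} [Fintype n] [DecidableEq n] {A : Matrix n n ℂ} (hA : A.PosSemidef) :
    Matrix n n ℂ :=
  hA.1.eigenvectorUnitary.1 * Matrix.diagonal ((↑) ∘ Real.sqrt ∘ hA.1.eigenvalues) *
    (star hA.1.eigenvectorUnitary : Matrix n n ℂ)

lemma psdSqrt_herm {M : Matrix (Fin 3) (Fin 3) ℂ} (hM : M.PosSemidef) :
    (psdSqrt hM).conjTranspose = psdSqrt hM := by
  simp only [psdSqrt, Matrix.conjTranspose_mul, Matrix.diagonal_conjTranspose, Matrix.star_eq_conjTranspose,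
    Matrix.conjTranspose_conjTranspose, Matrix.mul_assoc]
  congr 3
  ext i
  simp

lemma psdSqrt_mul_self {M : Matrix (Fin 3) (Fin 3) ℂ} (hM : M.PosSemidef) :
    psdSqrt hM * psdSqrt hM = M := by
  conv_rhs => rw [hM.1.spectral_theorem]
  have hU : (star hM.1.eigenvectorUnitary : Matrix (Fin 3) (Fin 3) ℂ) * hM.1.eigenvectorUnitary.1 = 1 :=
    Unitary.coe_star_mul_self _
  simp only [psdSqrt, Unitary.conjStarAlgAut_apply]
  rw [show ∀ a b c d e f : Matrix (Fin 3) (Fin 3) ℂ, a * b * c * (d * e * f) = a * (b * (c * d) * e) * f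
    from fun a b c d e f => by simp only [Matrix.mul_assoc], hU, Matrix.mul_one, Matrix.diagonal_mul_diagonal]
  congr 3
  ext i
  simp only [Function.comp_apply]
  rw [← Complex.ofReal_mul, Real.mul_self_sqrt (hM.eigenvalues_nonneg i)]
  rfl

lemma inner_tmul {m n : ℕ} (a c : Fin m → ℂ) (b d : Fin n → ℂ) :
    ⟪tmul a b, tmul c d⟫_ℂ = dotProduct (star a) c * dotProduct (star b) d := by
  simp only [tmul, PiLp.inner_apply, RCLike.inner_apply, dotProduct, Pi.star_apply,
    RCLike.star_def, Finset.sum_mul_sum, Fintype.sum_prod_type, _root_.map_mul]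
  congr 1; ext i; congr 1; ext j; ring

lemma dot_sqrt {M : Matrix (Fin 3) (Fin 3) ℂ} (hM : M.PosSemidef) (u v : Fin 3 → ℂ) :
    dotProduct (star ((psdSqrt hM).mulVec u)) ((psdSqrt hM).mulVec v)
      = dotProduct (star u) (M.mulVec v) := by
  rw [Matrix.star_mulVec, Matrix.dotProduct_mulVec, Matrix.vecMul_vecMul,
    psdSqrt_herm, psdSqrt_mul_self, ← Matrix.dotProduct_mulVec]

/-- If M is a 3×3 PSD matrix on Alice's side such that the post-measurement vectors
`(M^{1/2} ⊗ I)ψ`, ψ ∈ S₁, are pairwise orthogonal, then M = diag(λ₀, λ, λ) with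
λ₀, λ ≥ 0. -/
theorem stmt7 (M : Matrix (Fin 3) (Fin 3) ℂ) (hM : M.PosSemidef)
    (horth : ∀ i j : Fin 9, i ≠ j →
      ⟪tmul ((psdSqrt hM).mulVec (S1A i)) (S1B i),
        tmul ((psdSqrt hM).mulVec (S1A j)) (S1B j)⟫_ℂ = 0) :
    ∃ l0 l : ℝ, 0 ≤ l0 ∧ 0 ≤ l ∧
      M = Matrix.diagonal ![(l0 : ℂ), (l : ℂ), (l : ℂ)] := by
  have key : ∀ i j : Fin 9, i ≠ j →
      dotProduct (star (S1A i)) (M.mulVec (S1A j)) *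
      dotProduct (star (S1B i)) (S1B j) = 0 := by
    intro i j hij
    have h := horth i j hij
    rwa [inner_tmul, dot_sqrt] at h
  have hs2 : (Real.sqrt 2 : ℂ) ≠ 0 := by
    simpa using Real.sqrt_ne_zero'.mpr (by norm_num : (0:ℝ) < 2)
  have e1 := key 0 3 (by decide)
  have e2 := key 0 4 (by decide)
  have e3 := key 5 7 (by decide)
  have e4 := key 3 4 (by decide)
  rw [show S1A 0 = ket 0 from rfl, show S1A 3 = plusK 1 2 from rfl,
      show S1B 0 = plusK 0 1 from rfl, show S1B 3 = ket 0 from rfl] at e1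
  rw [show S1A 0 = ket 0 from rfl, show S1A 4 = minusK 1 2 from rfl,
      show S1B 0 = plusK 0 1 from rfl, show S1B 4 = ket 0 from rfl] at e2
  rw [show S1A 5 = ket 1 from rfl, show S1A 7 = ket 2 from rfl,
      show S1B 5 = plusK 1 2 from rfl, show S1B 7 = ket 1 from rfl] at e3
  rw [show S1A 3 = plusK 1 2 from rfl, show S1A 4 = minusK 1 2 from rfl,
      show S1B 3 = ket 0 from rfl, show S1B 4 = ket 0 from rfl] at e4
  simp [ket, plusK, minusK, dotProduct, Matrix.mulVec, Fin.sum_univ_three,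
    map_inv₀, Complex.conj_ofReal, hs2] at e1 e2 e3 e4
  field_simp at e1 e2 e4
  have h01 : M 0 1 = 0 := by linear_combination (e1 + e2) / 2
  have h02 : M 0 2 = 0 := by linear_combination (e1 - e2) / 2
  have h10 : M 1 0 = 0 := by rw [← hM.1]; simp [Matrix.conjTranspose_apply, h01]
  have h20 : M 2 0 = 0 := by rw [← hM.1]; simp [Matrix.conjTranspose_apply, h02]
  have h21 : M 2 1 = 0 := by rw [← hM.1]; simp [Matrix.conjTranspose_apply, e3]
  have h22 : M 2 2 = M 1 1 := by linear_combination -e4 - e3 + h21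
  have d0 : (0:ℂ) ≤ M 0 0 := by
    simpa [ket, dotProduct, Matrix.mulVec, Fin.sum_univ_three] using hM.dotProduct_mulVec_nonneg (ket 0)
  have d1 : (0:ℂ) ≤ M 1 1 := by
    simpa [ket, dotProduct, Matrix.mulVec, Fin.sum_univ_three] using hM.dotProduct_mulVec_nonneg (ket 1)
  obtain ⟨hre0, him0⟩ := Complex.le_def.mp d0
  obtain ⟨hre1, him1⟩ := Complex.le_def.mp d1
  refine ⟨(M 0 0).re, (M 1 1).re, by simpa using hre0, by simpa using hre1, ?_⟩
  have hd0 : M 0 0 = ((M 0 0).re : ℂ) := by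
    rw [Complex.ext_iff]; simp [← him0]
  have hd1 : M 1 1 = ((M 1 1).re : ℂ) := by
    rw [Complex.ext_iff]; simp [← him1]
  ext i j
  fin_cases i <;> fin_cases j <;>
    simp [Matrix.diagonal, h01, h02, h10, h20, h21, e3, h22, ← hd0, ← hd1]

end
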